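/- arXiv:1411.5923 — 3 statements merged into one kernel-verified Lean document; each statement's English description precedes it below -/
import Mathlib

section
/- Fix a switching sequence ψ, an initial distribution p(0), and t ∈ ℕ₀; let ψ_t(k) := ψ(t+k) and let p_t(0) := p(t) be the row vector p(0)Π(ψ(1))⋯Π(ψ(t)). If the Markov jump linear system (𝒢, Π∘ψ, p(0)) is exponentially mean square stable with constants c, λ and mean square strictly contractive with constant γ, then the shifted system (𝒢, Π∘ψ_t, p_t(0)) is exponentially mean square stable with the same constants c, λ and mean square strictly contractive with the same constant γ. -/
open Matrix
open scoped Classical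

noncomputable section

namespace SMJLS

/-- The ordered product `Φ = A(t(d−1)) ⋯ A(t 1) A(t 0)` along a tuple of modes. -/
def pathProd {n N : ℕ} (Am : Fin N → Matrix (Fin n) (Fin n) ℝ) {d : ℕ}
    (t : Fin d → Fin N) : Matrix (Fin n) (Fin n) ℝ :=
  (((List.finRange d).reverse).map fun l => Am (t l)).prod

/-- `Gmat Am Pm ψ i j k` is `E[Φ(k,j)ᵀ Φ(k,j) ∣ θ(j) = i]`, written as the explicit sum over
tuples `(i_j, …, i_{k−1}) ∈ 𝒩^{k−j}` with `i_j = i` of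
`(∏_{l=j+1}^{k−1} π_{i_{l−1} i_l}(ψ(l))) • ΦᵀΦ` where `Φ = A(i_{k−1}) ⋯ A(i_j)`;
by convention it is `I` when `k = j`. -/
def Gmat {n N J : ℕ} (Am : Fin N → Matrix (Fin n) (Fin n) ℝ)
    (Pm : Fin J → Matrix (Fin N) (Fin N) ℝ) (ψ : ℕ → Fin J) (i : Fin N) (j k : ℕ) :
    Matrix (Fin n) (Fin n) ℝ :=
  if k ≤ j then 1
  else
    ∑ t : Fin (k - j - 1 + 1) → Fin N,
      (if t 0 = i then
          ∏ l : Fin (k - j - 1), Pm (ψ (j + (l : ℕ) + 1)) (t l.castSucc) (t l.succ)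
        else 0) • ((pathProd Am t)ᵀ * pathProd Am t)

/-- Exponential mean square stability (of a single switching sequence) with
explicit constants `c` and `lam`:  `G_ψ(i,j,k) ≤ c λ^(k−j) I` in the Loewner order. -/
def EMSSWith {n N J : ℕ} (Am : Fin N → Matrix (Fin n) (Fin n) ℝ)
    (Pm : Fin J → Matrix (Fin N) (Fin N) ℝ) (c lam : ℝ) (ψ : ℕ → Fin J) : Prop :=
  ∀ (i : Fin N) (j k : ℕ), j ≤ k →
    ((c * lam ^ (k - j)) • (1 : Matrix (Fin n) (Fin n) ℝ) - Gmat Am Pm ψ i j k).PosSemidef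

/-- Uniform exponential mean square stability of the switched Markov jump linear system. -/
def UEMSS {n N J : ℕ} (Am : Fin N → Matrix (Fin n) (Fin n) ℝ)
    (Pm : Fin J → Matrix (Fin N) (Fin N) ℝ) (Ψ : Set (ℕ → Fin J)) : Prop :=
  ∃ c lam : ℝ, 1 ≤ c ∧ 0 ≤ lam ∧ lam < 1 ∧ ∀ ψ ∈ Ψ, EMSSWith Am Pm c lam ψ

/-- Probability of the cylinder `{θ(0) = path 0, …, θ(k) = path k}`. -/
def weight {N J : ℕ} (Pm : Fin J → Matrix (Fin N) (Fin N) ℝ) (ψ : ℕ → Fin J)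
    (p0 : Fin N → ℝ) (k : ℕ) (path : Fin (k + 1) → Fin N) : ℝ :=
  p0 (path 0) * ∏ l : Fin k, Pm (ψ ((l : ℕ) + 1)) (path l.castSucc) (path l.succ)

/-- Expectation of a functional `g` of the chain which depends only on `θ(0), …, θ(k)`. -/
def pexp {N J : ℕ} (Pm : Fin J → Matrix (Fin N) (Fin N) ℝ) (ψ : ℕ → Fin J)
    (p0 : Fin N → ℝ) (k : ℕ) (g : (ℕ → Fin N) → ℝ) : ℝ :=
  ∑ path : Fin (k + 1) → Fin N,
    weight Pm ψ p0 k path *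
      g (fun l => path ⟨min l k, Nat.lt_succ_of_le (min_le_right l k)⟩)

/-- A disturbance process is adapted when `w(k)` is measurable with respect to
`σ(θ(0),…,θ(k))`, i.e. `w(k)` is a function of the first `k+1` modes. -/
def Adapted {N m : ℕ} (w : ℕ → (ℕ → Fin N) → Fin m → ℝ) : Prop :=
  ∀ (k : ℕ) (ω ω' : ℕ → Fin N), (∀ l, l ≤ k → ω l = ω' l) → w k ω = w k ω'

/-- State trajectory: `x(k+1) = A(θ(k)) x(k) + B(θ(k)) w(k)`, `x(0) = x0`. -/
def traj {n m N : ℕ} (Am : Fin N → Matrix (Fin n) (Fin n) ℝ)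
    (Bm : Fin N → Matrix (Fin n) (Fin m) ℝ) (x0 : (ℕ → Fin N) → Fin n → ℝ)
    (w : ℕ → (ℕ → Fin N) → Fin m → ℝ) : ℕ → (ℕ → Fin N) → Fin n → ℝ
  | 0, ω => x0 ω
  | k + 1, ω => (Am (ω k)).mulVec (traj Am Bm x0 w k ω) + (Bm (ω k)).mulVec (w k ω)

/-- Error trajectory: `z(k) = C(θ(k)) x(k) + D(θ(k)) w(k)`. -/
def errv {n m p N : ℕ} (Am : Fin N → Matrix (Fin n) (Fin n) ℝ)
    (Bm : Fin N → Matrix (Fin n) (Fin m) ℝ) (Cm : Fin N → Matrix (Fin p) (Fin n) ℝ)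
    (Dm : Fin N → Matrix (Fin p) (Fin m) ℝ) (x0 : (ℕ → Fin N) → Fin n → ℝ)
    (w : ℕ → (ℕ → Fin N) → Fin m → ℝ) (k : ℕ) (ω : ℕ → Fin N) : Fin p → ℝ :=
  (Cm (ω k)).mulVec (traj Am Bm x0 w k ω) + (Dm (ω k)).mulVec (w k ω)

/-- `E[‖v(k)‖²]` for an adapted process `v`. -/
def energy {N J d : ℕ} (Pm : Fin J → Matrix (Fin N) (Fin N) ℝ) (ψ : ℕ → Fin J)
    (p0 : Fin N → ℝ) (v : ℕ → (ℕ → Fin N) → Fin d → ℝ) (k : ℕ) : ℝ :=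
  pexp Pm ψ p0 k (fun ω => v k ω ⬝ᵥ v k ω)

/-- Mean square strict contractiveness with constant `γ` for the single switching
sequence `ψ` : whenever `x(0) = 0`, `‖z‖_{2,e} ≤ γ ‖w‖_{2,e}` for every admissible `w`. -/
def ContractiveWith {n m p N J : ℕ} (Am : Fin N → Matrix (Fin n) (Fin n) ℝ)
    (Bm : Fin N → Matrix (Fin n) (Fin m) ℝ) (Cm : Fin N → Matrix (Fin p) (Fin n) ℝ)
    (Dm : Fin N → Matrix (Fin p) (Fin m) ℝ) (Pm : Fin J → Matrix (Fin N) (Fin N) ℝ)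
    (γ : ℝ) (ψ : ℕ → Fin J) (p0 : Fin N → ℝ) : Prop :=
  ∀ w : ℕ → (ℕ → Fin N) → Fin m → ℝ, Adapted w →
    Summable (fun k => energy Pm ψ p0 w k) →
    Summable (fun k => energy Pm ψ p0 (errv Am Bm Cm Dm (fun _ => 0) w) k) ∧
      ∑' k, energy Pm ψ p0 (errv Am Bm Cm Dm (fun _ => 0) w) k ≤
        γ ^ 2 * ∑' k, energy Pm ψ p0 w k

/-- Uniform mean square strict contractiveness of the switched system. -/
def UMSSC {n m p N J : ℕ} (Am : Fin N → Matrix (Fin n) (Fin n) ℝ)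
    (Bm : Fin N → Matrix (Fin n) (Fin m) ℝ) (Cm : Fin N → Matrix (Fin p) (Fin n) ℝ)
    (Dm : Fin N → Matrix (Fin p) (Fin m) ℝ) (Pm : Fin J → Matrix (Fin N) (Fin N) ℝ)
    (Ψ : Set (ℕ → Fin J)) (p0 : Fin N → ℝ) : Prop :=
  ∃ γ : ℝ, 0 < γ ∧ γ < 1 ∧ ∀ ψ ∈ Ψ, ContractiveWith Am Bm Cm Dm Pm γ ψ p0

/-- Marginal distribution `p(k) = p(0) Π(ψ(1)) ⋯ Π(ψ(k))` of the chain. -/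
def pdist {N J : ℕ} (Pm : Fin J → Matrix (Fin N) (Fin N) ℝ) (ψ : ℕ → Fin J)
    (p0 : Fin N → ℝ) : ℕ → Fin N → ℝ
  | 0 => p0
  | k + 1 => Matrix.vecMul (pdist Pm ψ p0 k) (Pm (ψ (k + 1)))

/-- `ℒ(i,X) = A(i)ᵀ X A(i) + C(i)ᵀ C(i)`. -/
def opL {n p N : ℕ} (Am : Fin N → Matrix (Fin n) (Fin n) ℝ)
    (Cm : Fin N → Matrix (Fin p) (Fin n) ℝ) (i : Fin N) (X : Matrix (Fin n) (Fin n) ℝ) :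
    Matrix (Fin n) (Fin n) ℝ :=
  (Am i)ᵀ * X * Am i + (Cm i)ᵀ * Cm i

/-- `ℛ(i,X) = B(i)ᵀ X A(i) + D(i)ᵀ C(i)`. -/
def opR {n m p N : ℕ} (Am : Fin N → Matrix (Fin n) (Fin n) ℝ)
    (Bm : Fin N → Matrix (Fin n) (Fin m) ℝ) (Cm : Fin N → Matrix (Fin p) (Fin n) ℝ)
    (Dm : Fin N → Matrix (Fin p) (Fin m) ℝ) (i : Fin N) (X : Matrix (Fin n) (Fin n) ℝ) :
    Matrix (Fin m) (Fin n) ℝ :=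
  (Bm i)ᵀ * X * Am i + (Dm i)ᵀ * Cm i

/-- `𝒲(i,X) = I − B(i)ᵀ X B(i) − D(i)ᵀ D(i)`. -/
def opW {n m p N : ℕ} (Bm : Fin N → Matrix (Fin n) (Fin m) ℝ)
    (Dm : Fin N → Matrix (Fin p) (Fin m) ℝ) (i : Fin N) (X : Matrix (Fin n) (Fin n) ℝ) :
    Matrix (Fin m) (Fin m) ℝ :=
  1 - (Bm i)ᵀ * X * Bm i - (Dm i)ᵀ * Dm i

/-- `𝒮(i,X) = ℒ(i,X) + ℛ(i,X)ᵀ 𝒲(i,X)⁻¹ ℛ(i,X)`. -/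
def opS {n m p N : ℕ} (Am : Fin N → Matrix (Fin n) (Fin n) ℝ)
    (Bm : Fin N → Matrix (Fin n) (Fin m) ℝ) (Cm : Fin N → Matrix (Fin p) (Fin n) ℝ)
    (Dm : Fin N → Matrix (Fin p) (Fin m) ℝ) (i : Fin N) (X : Matrix (Fin n) (Fin n) ℝ) :
    Matrix (Fin n) (Fin n) ℝ :=
  opL Am Cm i X + (opR Am Bm Cm Dm i X)ᵀ * (opW Bm Dm i X)⁻¹ * opR Am Bm Cm Dm i X

/-- `ℱ(i,X) = A(i) + B(i) 𝒲(i,X)⁻¹ ℛ(i,X)`. -/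
def opF {n m p N : ℕ} (Am : Fin N → Matrix (Fin n) (Fin n) ℝ)
    (Bm : Fin N → Matrix (Fin n) (Fin m) ℝ) (Cm : Fin N → Matrix (Fin p) (Fin n) ℝ)
    (Dm : Fin N → Matrix (Fin p) (Fin m) ℝ) (i : Fin N) (X : Matrix (Fin n) (Fin n) ℝ) :
    Matrix (Fin n) (Fin n) ℝ :=
  Am i + Bm i * (opW Bm Dm i X)⁻¹ * opR Am Bm Cm Dm i X

/-- Backwards recursion for the perturbed finite-horizon Riccati difference equation,
indexed by the number `d = T + 1 − k` of remaining steps. -/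
def ricAuxE {n m p N J : ℕ} (Am : Fin N → Matrix (Fin n) (Fin n) ℝ)
    (Bm : Fin N → Matrix (Fin n) (Fin m) ℝ) (Cm : Fin N → Matrix (Fin p) (Fin n) ℝ)
    (Dm : Fin N → Matrix (Fin p) (Fin m) ℝ) (Pm : Fin J → Matrix (Fin N) (Fin N) ℝ)
    (ψ : ℕ → Fin J) (T : ℕ) (ε : ℝ) : ℕ → Fin N → Matrix (Fin n) (Fin n) ℝ
  | 0, _ => 0
  | d + 1, i =>
      opS Am Bm Cm Dm i
          (∑ j, Pm (ψ (T - d + 1)) i j • ricAuxE Am Bm Cm Dm Pm ψ T ε d j) + ε • 1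

/-- The perturbed finite-horizon Riccati solution `X_ψ(i,k,T,ε)`:
`X_ψ(i,T+1,T,ε) = 0` and `X_ψ(i,k,T,ε) = 𝒮(i, X̃_ψ(i,k+1,T,ε)) + εI` where
`X̃_ψ(i,k+1,T,ε) = Σ_j π_{ij}(ψ(k+1)) X_ψ(j,k+1,T,ε)`. -/
def ricE {n m p N J : ℕ} (Am : Fin N → Matrix (Fin n) (Fin n) ℝ)
    (Bm : Fin N → Matrix (Fin n) (Fin m) ℝ) (Cm : Fin N → Matrix (Fin p) (Fin n) ℝ)
    (Dm : Fin N → Matrix (Fin p) (Fin m) ℝ) (Pm : Fin J → Matrix (Fin N) (Fin N) ℝ)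
    (ψ : ℕ → Fin J) (i : Fin N) (k T : ℕ) (ε : ℝ) : Matrix (Fin n) (Fin n) ℝ :=
  ricAuxE Am Bm Cm Dm Pm ψ T ε (T + 1 - k) i

/-- The (unperturbed) finite-horizon Riccati solution `X_ψ(i,k,T)`. -/
def ric {n m p N J : ℕ} (Am : Fin N → Matrix (Fin n) (Fin n) ℝ)
    (Bm : Fin N → Matrix (Fin n) (Fin m) ℝ) (Cm : Fin N → Matrix (Fin p) (Fin n) ℝ)
    (Dm : Fin N → Matrix (Fin p) (Fin m) ℝ) (Pm : Fin J → Matrix (Fin N) (Fin N) ℝ)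
    (ψ : ℕ → Fin J) (i : Fin N) (k T : ℕ) : Matrix (Fin n) (Fin n) ℝ :=
  ricE Am Bm Cm Dm Pm ψ i k T 0

/-- `ℬ(i,X,Y) = [[A,B],[C,D]]ᵀ diag(X,I) [[A,B],[C,D]] − diag(Y,I)`. -/
def bigB {n m p N : ℕ} (Am : Fin N → Matrix (Fin n) (Fin n) ℝ)
    (Bm : Fin N → Matrix (Fin n) (Fin m) ℝ) (Cm : Fin N → Matrix (Fin p) (Fin n) ℝ)
    (Dm : Fin N → Matrix (Fin p) (Fin m) ℝ) (i : Fin N)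
    (X Y : Matrix (Fin n) (Fin n) ℝ) : Matrix (Fin n ⊕ Fin m) (Fin n ⊕ Fin m) ℝ :=
  (Matrix.fromBlocks (Am i) (Bm i) (Cm i) (Dm i))ᵀ *
      Matrix.fromBlocks X 0 0 (1 : Matrix (Fin p) (Fin p) ℝ) *
      Matrix.fromBlocks (Am i) (Bm i) (Cm i) (Dm i) -
    Matrix.fromBlocks Y 0 0 (1 : Matrix (Fin m) (Fin m) ℝ)

/-- The switching window `ψ_M(k) = (ψ(k+1), …, ψ(k+M))`. -/
def window {J : ℕ} (ψ : ℕ → Fin J) (M k : ℕ) : Fin M → Fin J :=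
  fun l => ψ (k + (l : ℕ) + 1)

/-- `Ψ_M`, the set of all windows of length `M` occurring in `Ψ`. -/
def windowSet {J : ℕ} (Ψ : Set (ℕ → Fin J)) (M : ℕ) : Set (Fin M → Fin J) :=
  { r | ∃ ψ ∈ Ψ, ∃ t : ℕ, r = window ψ M t }

/-- Closed-loop matrix `ℱ(i, X̃_ψ(i, l+1, T, ε))` at time `l`. -/
def Fcl {n m p N J : ℕ} (Am : Fin N → Matrix (Fin n) (Fin n) ℝ)
    (Bm : Fin N → Matrix (Fin n) (Fin m) ℝ) (Cm : Fin N → Matrix (Fin p) (Fin n) ℝ)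
    (Dm : Fin N → Matrix (Fin p) (Fin m) ℝ) (Pm : Fin J → Matrix (Fin N) (Fin N) ℝ)
    (ψ : ℕ → Fin J) (T : ℕ) (ε : ℝ) (i : Fin N) (l : ℕ) : Matrix (Fin n) (Fin n) ℝ :=
  opF Am Bm Cm Dm i (∑ j, Pm (ψ (l + 1)) i j • ricE Am Bm Cm Dm Pm ψ j (l + 1) T ε)

/-- Ordered closed-loop product `φ = F(t(d−1), j+d−1) ⋯ F(t 0, j)`. -/
def clPathProd {n N : ℕ} (F : Fin N → ℕ → Matrix (Fin n) (Fin n) ℝ) (j : ℕ) {d : ℕ}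
    (t : Fin d → Fin N) : Matrix (Fin n) (Fin n) ℝ :=
  (((List.finRange d).reverse).map fun l => F (t l) (j + (l : ℕ))).prod

/-- Closed-loop conditional second moment `H_ψ(i,j,k,T,ε)`. -/
def Hmat {n m p N J : ℕ} (Am : Fin N → Matrix (Fin n) (Fin n) ℝ)
    (Bm : Fin N → Matrix (Fin n) (Fin m) ℝ) (Cm : Fin N → Matrix (Fin p) (Fin n) ℝ)
    (Dm : Fin N → Matrix (Fin p) (Fin m) ℝ) (Pm : Fin J → Matrix (Fin N) (Fin N) ℝ)
    (ψ : ℕ → Fin J) (T : ℕ) (ε : ℝ) (i : Fin N) (j k : ℕ) :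
    Matrix (Fin n) (Fin n) ℝ :=
  if k ≤ j then 1
  else
    ∑ t : Fin (k - j - 1 + 1) → Fin N,
      (if t 0 = i then
          ∏ l : Fin (k - j - 1), Pm (ψ (j + (l : ℕ) + 1)) (t l.castSucc) (t l.succ)
        else 0) •
        ((clPathProd (Fcl Am Bm Cm Dm Pm ψ T ε) j t)ᵀ *
          clPathProd (Fcl Am Bm Cm Dm Pm ψ T ε) j t)

/-- `Y_ψ(i,k) = Σ_{j=k}^{k+M+1} E[Φ(j,k)ᵀΦ(j,k) ∣ θ(k)=i]`. -/
def Ysum {n N J : ℕ} (Am : Fin N → Matrix (Fin n) (Fin n) ℝ)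
    (Pm : Fin J → Matrix (Fin N) (Fin N) ℝ) (ψ : ℕ → Fin J) (M : ℕ) (i : Fin N)
    (k : ℕ) : Matrix (Fin n) (Fin n) ℝ :=
  ∑ j ∈ Finset.range (M + 2), Gmat Am Pm ψ i k (k + j)

/-! ### Auxiliary lemmas for shift invariance -/

section Aux

variable {n m p N J : ℕ}

def Gaux (Am : Fin N → Matrix (Fin n) (Fin n) ℝ)
    (π : ℕ → Matrix (Fin N) (Fin N) ℝ) (i : Fin N) (d : ℕ) :
    Matrix (Fin n) (Fin n) ℝ :=
  ∑ t : Fin (d + 1) → Fin N,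
    (if t 0 = i then ∏ l : Fin d, π (l : ℕ) (t l.castSucc) (t l.succ) else 0) •
      ((pathProd Am t)ᵀ * pathProd Am t)

lemma Gmat_eq_Gaux (Am : Fin N → Matrix (Fin n) (Fin n) ℝ)
    (Pm : Fin J → Matrix (Fin N) (Fin N) ℝ) (ψ : ℕ → Fin J) (i : Fin N) (j k : ℕ) :
    Gmat Am Pm ψ i j k =
      if k ≤ j then 1 else Gaux Am (fun a => Pm (ψ (j + a + 1))) i (k - j - 1) := rfl

lemma Gmat_shift (Am : Fin N → Matrix (Fin n) (Fin n) ℝ)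
    (Pm : Fin J → Matrix (Fin N) (Fin N) ℝ) (ψ : ℕ → Fin J) (t : ℕ)
    (i : Fin N) (j k : ℕ) :
    Gmat Am Pm (fun l => ψ (t + l)) i j k = Gmat Am Pm ψ i (t + j) (t + k) := by
  rw [Gmat_eq_Gaux, Gmat_eq_Gaux]
  by_cases h : k ≤ j
  · rw [if_pos h, if_pos (by omega)]
  · rw [if_neg h, if_neg (by omega)]
    have h5 : t + k - (t + j) - 1 = k - j - 1 := by omega
    rw [h5]
    show Gaux Am (fun a => Pm (ψ (t + (j + a + 1)))) i (k - j - 1) =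
      Gaux Am (fun a => Pm (ψ (t + j + a + 1))) i (k - j - 1)
    have h7 : (fun a : ℕ => Pm (ψ (t + (j + a + 1)))) =
        fun a : ℕ => Pm (ψ (t + j + a + 1)) := by
      funext a
      have h6 : t + (j + a + 1) = t + j + a + 1 := by omega
      rw [h6]
    rw [h7]

lemma pexp_step (Pm : Fin J → Matrix (Fin N) (Fin N) ℝ) (ψ : ℕ → Fin J)
    (q : Fin N → ℝ) (k : ℕ) (g : (ℕ → Fin N) → ℝ) :
    pexp Pm ψ q (k + 1) (fun ω => g fun l => ω (l + 1)) =
      pexp Pm (fun l => ψ (l + 1)) (Matrix.vecMul q (Pm (ψ 1))) k g := by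
  unfold pexp weight
  rw [← Equiv.sum_comp (Fin.consEquiv fun _ : Fin (k + 2) => Fin N), Fintype.sum_prod_type,
    Finset.sum_comm]
  refine Finset.sum_congr rfl fun rest _ => ?_
  have hG : ∀ i0 : Fin N,
      (fun l => (Fin.cons i0 rest : ∀ _ : Fin (k + 2), Fin N)
          ⟨min (l + 1) (k + 1), Nat.lt_succ_of_le (min_le_right _ _)⟩) =
        fun l => rest ⟨min l k, Nat.lt_succ_of_le (min_le_right _ _)⟩ := by
    intro i0
    funext l
    have h1 : (⟨min (l + 1) (k + 1), Nat.lt_succ_of_le (min_le_right _ _)⟩ : Fin (k + 2)) =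
        Fin.succ ⟨min l k, Nat.lt_succ_of_le (min_le_right _ _)⟩ := by
      ext
      simp [Nat.succ_min_succ]
    rw [h1, Fin.cons_succ]
  have hprod : ∀ i0 : Fin N,
      (∏ l : Fin (k + 1), Pm (ψ ((l : ℕ) + 1))
          ((Fin.cons i0 rest : ∀ _ : Fin (k + 2), Fin N) l.castSucc)
          ((Fin.cons i0 rest : ∀ _ : Fin (k + 2), Fin N) l.succ)) =
        Pm (ψ 1) i0 (rest 0) *
          ∏ l : Fin k, Pm (ψ ((l : ℕ) + 1 + 1)) (rest l.castSucc) (rest l.succ) := by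
    intro i0
    rw [Fin.prod_univ_succ]
    congr 1
  simp only [Fin.consEquiv_apply]
  simp only [hG, hprod, Fin.cons_zero]
  have : ∀ i0 : Fin N,
      q i0 * (Pm (ψ 1) i0 (rest 0) *
          ∏ l : Fin k, Pm (ψ ((l : ℕ) + 1 + 1)) (rest l.castSucc) (rest l.succ)) *
        g (fun l => rest ⟨min l k, Nat.lt_succ_of_le (min_le_right _ _)⟩) =
      q i0 * Pm (ψ 1) i0 (rest 0) *
        ((∏ l : Fin k, Pm (ψ ((l : ℕ) + 1 + 1)) (rest l.castSucc) (rest l.succ)) *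
          g (fun l => rest ⟨min l k, Nat.lt_succ_of_le (min_le_right _ _)⟩)) := by
    intro i0; ring
  simp only [this]
  rw [← Finset.sum_mul]
  have hvm : Matrix.vecMul q (Pm (ψ 1)) (rest 0) = ∑ i0, q i0 * Pm (ψ 1) i0 (rest 0) := by
    simp [Matrix.vecMul, dotProduct]
  rw [hvm]
  ring

lemma pdist_step (Pm : Fin J → Matrix (Fin N) (Fin N) ℝ) (ψ : ℕ → Fin J)
    (q : Fin N → ℝ) :
    ∀ t : ℕ, pdist Pm (fun l => ψ (l + 1)) (Matrix.vecMul q (Pm (ψ 1))) t =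
      pdist Pm ψ q (t + 1)
  | 0 => rfl
  | t + 1 => by
    show Matrix.vecMul (pdist Pm (fun l => ψ (l + 1)) (Matrix.vecMul q (Pm (ψ 1))) t) _ = _
    rw [pdist_step Pm ψ q t]
    rfl

lemma pexp_shift (Pm : Fin J → Matrix (Fin N) (Fin N) ℝ) :
    ∀ (t : ℕ) (ψ : ℕ → Fin J) (q : Fin N → ℝ) (k : ℕ) (g : (ℕ → Fin N) → ℝ),
      pexp Pm ψ q (t + k) (fun ω => g fun l => ω (t + l)) =
        pexp Pm (fun l => ψ (t + l)) (pdist Pm ψ q t) k g := by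
  intro t
  induction t with
  | zero =>
    intro ψ q k g
    simp only [Nat.zero_add]
    rfl
  | succ t ih =>
    intro ψ q k g
    have h1 : t + 1 + k = t + k + 1 := by omega
    have hstep := pexp_step Pm ψ q (t + k) (fun ω' => g fun l => ω' (t + l))
    have h2 : (fun ω : ℕ → Fin N => g fun l => ω (t + 1 + l)) =
        fun ω => (fun ω' : ℕ → Fin N => g fun l => ω' (t + l)) fun l => ω (l + 1) := by
      funext ω
      show (g fun l => ω (t + 1 + l)) = g fun l => ω (t + l + 1)
      congr 1
      funext l
      congr 1
      omega
    rw [h1, h2, hstep, ih]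
    rw [pdist_step]
    have h4 : (fun l : ℕ => (fun l' : ℕ => ψ (l' + 1)) (t + l)) = fun l : ℕ => ψ (t + 1 + l) := by
      funext l
      show ψ (t + l + 1) = ψ (t + 1 + l)
      congr 1
      omega
    rw [h4]

end Aux
section Aux2

variable {n m p N J : ℕ}

def shiftW (t : ℕ) (w : ℕ → (ℕ → Fin N) → Fin m → ℝ) :
    ℕ → (ℕ → Fin N) → Fin m → ℝ :=
  fun k ω => if t ≤ k then w (k - t) (fun l => ω (t + l)) else 0

lemma shiftW_adapted (t : ℕ) (w : ℕ → (ℕ → Fin N) → Fin m → ℝ) (hw : Adapted w) :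
    Adapted (shiftW (N := N) t w) := by
  intro k ω ω' hagree
  unfold shiftW
  split
  · next h => exact hw (k - t) _ _ fun l hl => hagree (t + l) (by omega)
  · rfl

lemma traj_shiftW_zero (Am : Fin N → Matrix (Fin n) (Fin n) ℝ)
    (Bm : Fin N → Matrix (Fin n) (Fin m) ℝ) (t : ℕ)
    (w : ℕ → (ℕ → Fin N) → Fin m → ℝ) :
    ∀ k, k ≤ t → ∀ ω, traj Am Bm (fun _ => 0) (shiftW t w) k ω = 0 := by
  intro k
  induction k with
  | zero => intro _ ω; rfl
  | succ k ih =>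
    intro hk ω
    show (Am (ω k)).mulVec (traj Am Bm (fun _ => 0) (shiftW t w) k ω)
        + (Bm (ω k)).mulVec (shiftW t w k ω) = 0
    rw [ih (by omega) ω]
    unfold shiftW
    rw [if_neg (by omega)]
    simp

lemma traj_shiftW (Am : Fin N → Matrix (Fin n) (Fin n) ℝ)
    (Bm : Fin N → Matrix (Fin n) (Fin m) ℝ) (t : ℕ)
    (w : ℕ → (ℕ → Fin N) → Fin m → ℝ) :
    ∀ k ω, traj Am Bm (fun _ => 0) (shiftW t w) (t + k) ω =
      traj Am Bm (fun _ => 0) w k (fun l => ω (t + l)) := by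
  intro k
  induction k with
  | zero =>
    intro ω
    exact traj_shiftW_zero Am Bm t w t le_rfl ω
  | succ k ih =>
    intro ω
    show (Am (ω (t + k))).mulVec (traj Am Bm (fun _ => 0) (shiftW t w) (t + k) ω)
        + (Bm (ω (t + k))).mulVec (shiftW t w (t + k) ω)
      = (Am (ω (t + k))).mulVec (traj Am Bm (fun _ => 0) w k fun l => ω (t + l))
        + (Bm (ω (t + k))).mulVec (w k fun l => ω (t + l))
    rw [ih ω]
    congr 1
    unfold shiftW
    rw [if_pos (Nat.le_add_right t k), Nat.add_sub_cancel_left]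

lemma errv_shiftW (Am : Fin N → Matrix (Fin n) (Fin n) ℝ)
    (Bm : Fin N → Matrix (Fin n) (Fin m) ℝ) (Cm : Fin N → Matrix (Fin p) (Fin n) ℝ)
    (Dm : Fin N → Matrix (Fin p) (Fin m) ℝ) (t : ℕ)
    (w : ℕ → (ℕ → Fin N) → Fin m → ℝ) (k : ℕ) (ω : ℕ → Fin N) :
    errv Am Bm Cm Dm (fun _ => 0) (shiftW t w) (t + k) ω =
      errv Am Bm Cm Dm (fun _ => 0) w k (fun l => ω (t + l)) := by
  unfold errv
  rw [traj_shiftW]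
  congr 1
  unfold shiftW
  rw [if_pos (Nat.le_add_right t k), Nat.add_sub_cancel_left]

lemma energy_zero_of {d : ℕ} (Pm : Fin J → Matrix (Fin N) (Fin N) ℝ) (ψ : ℕ → Fin J)
    (q : Fin N → ℝ) (v : ℕ → (ℕ → Fin N) → Fin d → ℝ) (k : ℕ)
    (hv : ∀ ω, v k ω = 0) : energy Pm ψ q v k = 0 := by
  unfold energy pexp
  simp [hv, dotProduct]

lemma energy_shiftW (Pm : Fin J → Matrix (Fin N) (Fin N) ℝ) (ψ : ℕ → Fin J)
    (q : Fin N → ℝ) (t : ℕ) (w : ℕ → (ℕ → Fin N) → Fin m → ℝ) (k : ℕ) :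
    energy Pm ψ q (shiftW t w) (t + k) =
      energy Pm (fun l => ψ (t + l)) (pdist Pm ψ q t) w k := by
  unfold energy
  have h : (fun ω : ℕ → Fin N => shiftW t w (t + k) ω ⬝ᵥ shiftW t w (t + k) ω) =
      fun ω => (fun ω' : ℕ → Fin N => w k ω' ⬝ᵥ w k ω') fun l => ω (t + l) := by
    funext ω
    show shiftW t w (t + k) ω ⬝ᵥ shiftW t w (t + k) ω =
      (w k fun l => ω (t + l)) ⬝ᵥ (w k fun l => ω (t + l))
    unfold shiftW
    rw [if_pos (Nat.le_add_right t k), Nat.add_sub_cancel_left]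
  rw [h]
  exact pexp_shift Pm t ψ q k (fun ω' => w k ω' ⬝ᵥ w k ω')

lemma energy_errv_shiftW (Am : Fin N → Matrix (Fin n) (Fin n) ℝ)
    (Bm : Fin N → Matrix (Fin n) (Fin m) ℝ) (Cm : Fin N → Matrix (Fin p) (Fin n) ℝ)
    (Dm : Fin N → Matrix (Fin p) (Fin m) ℝ) (Pm : Fin J → Matrix (Fin N) (Fin N) ℝ)
    (ψ : ℕ → Fin J) (q : Fin N → ℝ) (t : ℕ)
    (w : ℕ → (ℕ → Fin N) → Fin m → ℝ) (k : ℕ) :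
    energy Pm ψ q (errv Am Bm Cm Dm (fun _ => 0) (shiftW t w)) (t + k) =
      energy Pm (fun l => ψ (t + l)) (pdist Pm ψ q t)
        (errv Am Bm Cm Dm (fun _ => 0) w) k := by
  unfold energy
  have h : (fun ω : ℕ → Fin N =>
        errv Am Bm Cm Dm (fun _ => 0) (shiftW t w) (t + k) ω ⬝ᵥ
          errv Am Bm Cm Dm (fun _ => 0) (shiftW t w) (t + k) ω) =
      fun ω => (fun ω' : ℕ → Fin N =>
          errv Am Bm Cm Dm (fun _ => 0) w k ω' ⬝ᵥ
            errv Am Bm Cm Dm (fun _ => 0) w k ω') fun l => ω (t + l) := by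
    funext ω
    show errv Am Bm Cm Dm (fun _ => 0) (shiftW t w) (t + k) ω ⬝ᵥ
        errv Am Bm Cm Dm (fun _ => 0) (shiftW t w) (t + k) ω =
      errv Am Bm Cm Dm (fun _ => 0) w k (fun l => ω (t + l)) ⬝ᵥ
        errv Am Bm Cm Dm (fun _ => 0) w k (fun l => ω (t + l))
    rw [errv_shiftW]
  rw [h]
  exact pexp_shift Pm t ψ q k
    (fun ω' => errv Am Bm Cm Dm (fun _ => 0) w k ω' ⬝ᵥ errv Am Bm Cm Dm (fun _ => 0) w k ω')

lemma errv_shiftW_zero (Am : Fin N → Matrix (Fin n) (Fin n) ℝ)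
    (Bm : Fin N → Matrix (Fin n) (Fin m) ℝ) (Cm : Fin N → Matrix (Fin p) (Fin n) ℝ)
    (Dm : Fin N → Matrix (Fin p) (Fin m) ℝ) (t : ℕ)
    (w : ℕ → (ℕ → Fin N) → Fin m → ℝ) (k : ℕ) (hk : k < t) (ω : ℕ → Fin N) :
    errv Am Bm Cm Dm (fun _ => 0) (shiftW t w) k ω = 0 := by
  unfold errv
  rw [traj_shiftW_zero Am Bm t w k (by omega) ω]
  unfold shiftW
  rw [if_neg (by omega)]
  simp

end Aux2
/-- (Lemma 5 of the paper, shift invariance.) Fix a switching sequence `ψ`,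
an initial distribution `p(0)` and `t ∈ ℕ₀`; let `ψ_t(k) = ψ(t+k)` and `p_t(0) = p(t)`. If
`(𝒢, Π∘ψ, p(0))` is exponentially mean square stable with constants `c, λ` and mean square
strictly contractive with constant `γ`, then the shifted system `(𝒢, Π∘ψ_t, p_t(0))` is
exponentially mean square stable with the same constants and mean square strictly
contractive with the same constant. -/
theorem statement16 (n m p N J : ℕ) (Am : Fin N → Matrix (Fin n) (Fin n) ℝ)
    (Bm : Fin N → Matrix (Fin n) (Fin m) ℝ) (Cm : Fin N → Matrix (Fin p) (Fin n) ℝ)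
    (Dm : Fin N → Matrix (Fin p) (Fin m) ℝ) (Pm : Fin J → Matrix (Fin N) (Fin N) ℝ)
    (hPnn : ∀ (s : Fin J) (i j : Fin N), 0 ≤ Pm s i j)
    (hProw : ∀ (s : Fin J) (i : Fin N), ∑ j, Pm s i j = 1)
    (ψ : ℕ → Fin J) (p0 : Fin N → ℝ) (hp0nn : ∀ i, 0 ≤ p0 i) (hp0sum : ∑ i, p0 i = 1)
    (t : ℕ) (c lam : ℝ) (hc : 1 ≤ c) (hlam0 : 0 ≤ lam) (hlam1 : lam < 1)
    (hstab : EMSSWith Am Pm c lam ψ)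
    (γ : ℝ) (hγ0 : 0 < γ) (hγ1 : γ < 1)
    (hcontr : ContractiveWith Am Bm Cm Dm Pm γ ψ p0) :
    EMSSWith Am Pm c lam (fun k => ψ (t + k)) ∧
      ContractiveWith Am Bm Cm Dm Pm γ (fun k => ψ (t + k)) (pdist Pm ψ p0 t) := by
  constructor
  · intro i j k hjk
    rw [Gmat_shift]
    have h := hstab i (t + j) (t + k) (by omega)
    have he : t + k - (t + j) = k - j := by omega
    rwa [he] at h
  · intro w hw hsum
    have hadapt := shiftW_adapted t w hw
    -- the shifted-energy identities
    have hEw : ∀ k, energy Pm ψ p0 (shiftW t w) (t + k) =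
        energy Pm (fun l => ψ (t + l)) (pdist Pm ψ p0 t) w k :=
      fun k => energy_shiftW Pm ψ p0 t w k
    have hEw0 : ∀ k, k < t → energy Pm ψ p0 (shiftW t w) k = 0 := by
      intro k hk
      refine energy_zero_of Pm ψ p0 _ k fun ω => ?_
      unfold shiftW
      rw [if_neg (by omega)]
    have hEz : ∀ k, energy Pm ψ p0 (errv Am Bm Cm Dm (fun _ => 0) (shiftW t w)) (t + k) =
        energy Pm (fun l => ψ (t + l)) (pdist Pm ψ p0 t)
          (errv Am Bm Cm Dm (fun _ => 0) w) k :=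
      fun k => energy_errv_shiftW Am Bm Cm Dm Pm ψ p0 t w k
    have hEz0 : ∀ k, k < t →
        energy Pm ψ p0 (errv Am Bm Cm Dm (fun _ => 0) (shiftW t w)) k = 0 := by
      intro k hk
      exact energy_zero_of Pm ψ p0 _ k fun ω => errv_shiftW_zero Am Bm Cm Dm t w k hk ω
    have hfunw : (fun k => energy Pm ψ p0 (shiftW t w) (k + t)) =
        fun k => energy Pm (fun l => ψ (t + l)) (pdist Pm ψ p0 t) w k := by
      funext k
      rw [add_comm k t]
      exact hEw k
    have hsumE : Summable (fun k => energy Pm ψ p0 (shiftW t w) k) := by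
      refine (summable_nat_add_iff t).mp ?_
      rw [hfunw]
      exact hsum
    obtain ⟨hz_sum, hz_le⟩ := hcontr (shiftW t w) hadapt hsumE
    have hfunz : (fun k =>
        energy Pm ψ p0 (errv Am Bm Cm Dm (fun _ => 0) (shiftW t w)) (k + t)) =
        fun k => energy Pm (fun l => ψ (t + l)) (pdist Pm ψ p0 t)
          (errv Am Bm Cm Dm (fun _ => 0) w) k := by
      funext k
      rw [add_comm k t]
      exact hEz k
    constructor
    · rw [← hfunz]
      exact (summable_nat_add_iff t).mpr hz_sum
    · -- the two tail sums agree with the full sums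
      have htz := Summable.sum_add_tsum_nat_add t hz_sum
      rw [Finset.sum_eq_zero (fun i hi => hEz0 i (Finset.mem_range.mp hi)), zero_add] at htz
      have htw := Summable.sum_add_tsum_nat_add t hsumE
      rw [Finset.sum_eq_zero (fun i hi => hEw0 i (Finset.mem_range.mp hi)), zero_add] at htw
      calc ∑' k, energy Pm (fun l => ψ (t + l)) (pdist Pm ψ p0 t)
            (errv Am Bm Cm Dm (fun _ => 0) w) k
          = ∑' k, energy Pm ψ p0 (errv Am Bm Cm Dm (fun _ => 0) (shiftW t w)) (k + t) := by
            rw [hfunz]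
        _ = ∑' k, energy Pm ψ p0 (errv Am Bm Cm Dm (fun _ => 0) (shiftW t w)) k := htz
        _ ≤ γ ^ 2 * ∑' k, energy Pm ψ p0 (shiftW t w) k := hz_le
        _ = γ ^ 2 * ∑' k, energy Pm ψ p0 (shiftW t w) (k + t) := by rw [htw]
        _ = γ ^ 2 * ∑' k, energy Pm (fun l => ψ (t + l)) (pdist Pm ψ p0 t) w k := by
            rw [hfunw]

end SMJLS
end
end

section
/- (Time-homogeneous stability criterion as a corollary.) Let Π be a single N×N stochastic matrix with entries π_{ij} and let ψ ≡ constant (so the Markov chain is time-homogeneous). Then the Markov jump linear system is exponentially mean square stable if and only if there exist symmetric positive definite n×n matrices Z(1),…,Z(N) such that A(i)ᵀ (Σ_{j=1}^{N} π_{ij} Z(j)) A(i) − Z(i) is negative definite for every i ∈ 𝒩. -/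
open Matrix
open scoped Classical

noncomputable section

/-!
Write `T X (i) = A(i)ᵀ (∑ⱼ π_{ij} X(j)) A(i)`; it is a monotone linear map on `N`-tuples of
matrices in the Loewner order, and `G(i,j,k) = (T^{k-j} I)(i)` because `Π` is stochastic.

If `T^d I ≤ c λ^d I` and `c λ^{D+1} < 1`, the truncated series `Z = ∑_{d ≤ D} T^d I` satisfies
`Z ≥ I` and `Z - T Z = I - T^{D+1} I ≥ (1 - c λ^{D+1}) I`.

Conversely, if `δ I ≤ Z ≤ b I` and `Z - T Z ≥ ε I`, then `T Z ≤ Z - ε I ≤ (1 - ε/b) Z`, and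
monotonicity of `T` gives `T^d I ≤ δ⁻¹ T^d Z ≤ δ⁻¹ (1 - ε/b)^d Z ≤ (b/δ) (1 - ε/b)^d I`.
-/

open scoped MatrixOrder Topology
open Filter

namespace Matrix

variable {m : Type*} [DecidableEq m]

theorem posDef_of_smul_one_le {M : Matrix m m ℝ} {δ : ℝ} (hδ : 0 < δ)
    (h : δ • (1 : Matrix m m ℝ) ≤ M) : M.PosDef := by
  have hδ1 : (δ • (1 : Matrix m m ℝ)).PosDef := by
    rw [smul_one_eq_diagonal]
    exact PosDef.diagonal fun _ => hδ
  simpa using hδ1.add_posSemidef (le_iff.1 h)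

variable [Fintype m]

theorem PosDef.eventually_smul_one_le {Z : Matrix m m ℝ} (hZ : Z.PosDef) :
    ∀ᶠ δ in 𝓝[>] (0 : ℝ), δ • (1 : Matrix m m ℝ) ≤ Z := by
  obtain ⟨δ, hδ, hδZ⟩ : ∃ δ : ℝ, δ > 0 ∧ δ • (1 : Matrix m m ℝ) ≤ Z := by
    cases isEmpty_or_nonempty m
    · exact ⟨1, one_pos, (Subsingleton.elim _ _).le⟩
    · simp_rw [← Algebra.algebraMap_eq_smul_one]
      exact (CFC.exists_pos_algebraMap_le_iff hZ.isHermitian.isSelfAdjoint).2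
        fun _ hx => hZ.isStrictlyPositive.spectrum_pos hx
  filter_upwards [Ioc_mem_nhdsGT hδ] with ε hε
  exact (smul_le_smul_of_nonneg_right hε.2 PosSemidef.one.nonneg).trans hδZ

theorem IsHermitian.eventually_le_smul_one {Z : Matrix m m ℝ} (hZ : Z.IsHermitian) :
    ∀ᶠ b : ℝ in atTop, Z ≤ b • (1 : Matrix m m ℝ) := by
  obtain ⟨b, hb⟩ := (Set.finite_range hZ.eigenvalues).bddAbove
  have hZb : Z ≤ b • (1 : Matrix m m ℝ) := by
    rw [← Algebra.algebraMap_eq_smul_one]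
    refine le_algebraMap_of_spectrum_le (fun x hx => hb ?_) hZ.isSelfAdjoint
    rwa [hZ.spectrum_real_eq_range_eigenvalues] at hx
  filter_upwards [eventually_ge_atTop b] with c hc
  exact hZb.trans (smul_le_smul_of_nonneg_right hc PosSemidef.one.nonneg)

theorem pi_exists_pos_smul_one_le {ι : Type*} [Finite ι] {Z : ι → Matrix m m ℝ}
    (hZ : ∀ i, (Z i).PosDef) : ∃ δ : ℝ, 0 < δ ∧ δ • (1 : ι → Matrix m m ℝ) ≤ Z :=
  ((eventually_all.2 fun i => (hZ i).eventually_smul_one_le).and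
    self_mem_nhdsWithin).exists.imp fun _ h => ⟨h.2, h.1⟩

theorem pi_exists_le_smul_one {ι : Type*} [Finite ι] {Z : ι → Matrix m m ℝ}
    (hZ : ∀ i, (Z i).IsHermitian) : ∃ b : ℝ, Z ≤ b • (1 : ι → Matrix m m ℝ) :=
  (eventually_all.2 fun i => (hZ i).eventually_le_smul_one).exists

end Matrix

namespace Module.End

variable {E : Type*} [AddCommGroup E] [PartialOrder E] [Module ℝ E] {T : Module.End ℝ E}

theorem monotone_pow (hT : Monotone T) (d : ℕ) : Monotone (T ^ d) := by
  rw [coe_pow]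
  exact hT.iterate d

theorem pow_apply_nonneg (hT : Monotone T) {u : E} (hu : 0 ≤ u) (d : ℕ) : 0 ≤ (T ^ d) u := by
  simpa using monotone_pow hT d hu

theorem pow_apply_le_smul [IsOrderedModule ℝ E] (hT : Monotone T) {Z : E} {r : ℝ} (hr : 0 ≤ r)
    (hZ : T Z ≤ r • Z) (d : ℕ) : (T ^ d) Z ≤ r ^ d • Z := by
  induction d with
  | zero => simp
  | succ d ih =>
    calc (T ^ (d + 1)) Z = T ((T ^ d) Z) := by rw [pow_succ', mul_apply]
      _ ≤ T (r ^ d • Z) := hT ih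
      _ = r ^ d • T Z := map_smul ..
      _ ≤ r ^ d • r • Z := smul_le_smul_of_nonneg_left hZ (pow_nonneg hr d)
      _ = r ^ (d + 1) • Z := by rw [smul_smul, pow_succ]

variable [IsOrderedAddMonoid E]

theorem exists_lyapunov_of_pow_apply_le (hT : Monotone T) {u : E} (hu : 0 ≤ u) {D : ℕ} {r : ℝ}
    (hD : (T ^ (D + 1)) u ≤ r • u) : ∃ Z, u ≤ Z ∧ (1 - r) • u ≤ Z - T Z := by
  refine ⟨∑ d ∈ Finset.range (D + 1), (T ^ d) u, ?_, ?_⟩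
  · rw [Finset.sum_range_succ', pow_zero, one_apply]
    exact le_add_of_nonneg_left (Finset.sum_nonneg fun d _ => pow_apply_nonneg hT hu _)
  · have htel : ∑ d ∈ Finset.range (D + 1), (T ^ d) u -
        T (∑ d ∈ Finset.range (D + 1), (T ^ d) u) = u - (T ^ (D + 1)) u := by
      simp only [map_sum, ← mul_apply, ← pow_succ', ← Finset.sum_sub_distrib]
      rw [Finset.sum_range_sub' (fun d => (T ^ d) u), pow_zero, one_apply]
    rw [htel, sub_smul, one_smul]
    exact sub_le_sub_left hD u

theorem exists_pow_apply_le_of_lyapunov [IsOrderedModule ℝ E] (hT : Monotone T) {u Z : E}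
    (hu : 0 ≤ u) {δ ε b : ℝ} (hδ : 0 < δ) (hε : 0 < ε) (hδZ : δ • u ≤ Z) (hZb : Z ≤ b • u)
    (hεZ : ε • u ≤ Z - T Z) :
    ∃ c r : ℝ, 1 ≤ c ∧ 0 ≤ r ∧ r < 1 ∧ ∀ d, (T ^ d) u ≤ (c * r ^ d) • u := by
  -- enlarging `b` to `B ≥ ε` keeps the rate `1 - ε / B` in `[0, 1)`
  set B := max b ε
  have hB : 0 < B := hε.trans_le (le_max_right _ _)
  have hZB : Z ≤ B • u := hZb.trans (smul_le_smul_of_nonneg_right (le_max_left _ _) hu)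
  have hεB : ε / B ≤ 1 := (div_le_one hB).2 (le_max_right _ _)
  have hcontract : T Z ≤ (1 - ε / B) • Z := by
    have h : (ε / B) • Z ≤ Z - T Z :=
      calc (ε / B) • Z ≤ (ε / B) • B • u := smul_le_smul_of_nonneg_left hZB (by positivity)
        _ = ε • u := by rw [smul_smul, div_mul_cancel₀ _ hB.ne']
        _ ≤ Z - T Z := hεZ
    rw [sub_smul, one_smul]
    rwa [le_sub_comm] at h
  refine ⟨max 1 (B / δ), 1 - ε / B, le_max_left _ _, by linarith, by
    linarith [div_pos hε hB], fun d => ?_⟩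
  have hr : 0 ≤ (1 - ε / B) ^ d := pow_nonneg (by linarith) d
  calc (T ^ d) u ≤ (T ^ d) (δ⁻¹ • Z) := by
        refine monotone_pow hT d ?_
        rw [← inv_smul_smul₀ hδ.ne' u]
        exact smul_le_smul_of_nonneg_left hδZ (by positivity)
    _ = δ⁻¹ • (T ^ d) Z := map_smul ..
    _ ≤ δ⁻¹ • (1 - ε / B) ^ d • B • u := by
        refine smul_le_smul_of_nonneg_left ?_ (by positivity)
        exact (pow_apply_le_smul hT (by linarith) hcontract d).trans
          (smul_le_smul_of_nonneg_left hZB hr)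
    _ = (B / δ * (1 - ε / B) ^ d) • u := by
        rw [smul_smul, smul_smul]
        ring_nf
    _ ≤ (max 1 (B / δ) * (1 - ε / B) ^ d) • u :=
        smul_le_smul_of_nonneg_right (mul_le_mul_of_nonneg_right (le_max_right _ _) hr) hu

end Module.End

theorem Fintype.sum_fun_fin_succ {α M : Type*} [Fintype α] [AddCommMonoid M] {d : ℕ}
    (f : (Fin (d + 1) → α) → M) : ∑ t, f t = ∑ x, ∑ t : Fin d → α, f (Fin.cons x t) := by
  rw [← (Fin.consEquiv fun _ => α).sum_comp, Fintype.sum_prod_type]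
  rfl

namespace SMJLS

variable {n N : ℕ} (Am : Fin N → Matrix (Fin n) (Fin n) ℝ) (P : Matrix (Fin N) (Fin N) ℝ)

def secondMomentOp : Module.End ℝ (Fin N → Matrix (Fin n) (Fin n) ℝ) where
  toFun X i := (Am i)ᵀ * (∑ j, P i j • X j) * Am i
  map_add' X Y := by
    ext1 i
    simp [smul_add, Finset.sum_add_distrib, Matrix.mul_add, Matrix.add_mul]
  map_smul' a X := by
    ext1 i
    simp only [Pi.smul_apply, smul_comm (P i _) a, ← Finset.smul_sum, Matrix.mul_smul,
      Matrix.smul_mul, RingHom.id_apply]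

@[simp]
theorem secondMomentOp_apply (X : Fin N → Matrix (Fin n) (Fin n) ℝ) (i : Fin N) :
    secondMomentOp Am P X i = (Am i)ᵀ * (∑ j, P i j • X j) * Am i :=
  rfl

variable {P} in
theorem secondMomentOp_monotone (hP : ∀ i j, 0 ≤ P i j) : Monotone (secondMomentOp Am P) := by
  intro X Y hXY i
  have h := star_left_conjugate_le_conjugate
    (Finset.sum_le_sum (s := Finset.univ) fun j _ =>
      smul_le_smul_of_nonneg_left (hXY j) (hP i j)) (Am i)
  simpa [star_eq_conjTranspose] using h

theorem pathProd_cons {d : ℕ} (x : Fin N) (t : Fin d → Fin N) :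
    pathProd Am (Fin.cons x t) = pathProd Am t * Am x := by
  unfold pathProd
  rw [List.finRange_succ, List.reverse_cons, List.map_append, List.prod_append,
    List.map_reverse, List.map_reverse, List.map_map]
  simp [Function.comp_def]

/-- `Gmat Am (fun _ => P) ψ i j (j + d + 1)`, for any `ψ`. -/
def pathMoment (d : ℕ) (i : Fin N) : Matrix (Fin n) (Fin n) ℝ :=
  ∑ t : Fin (d + 1) → Fin N,
    (if t 0 = i then ∏ l : Fin d, P (t l.castSucc) (t l.succ) else 0) •
      ((pathProd Am t)ᵀ * pathProd Am t)

theorem pathMoment_zero (i : Fin N) : pathMoment Am P 0 i = (Am i)ᵀ * Am i := by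
  simp [pathMoment, Fintype.sum_fun_fin_succ, pathProd, List.finRange_succ]

theorem pathMoment_succ (d : ℕ) :
    pathMoment Am P (d + 1) = secondMomentOp Am P (pathMoment Am P d) := by
  ext1 i
  have hsum : ∑ j, P i j • pathMoment Am P d j = ∑ t : Fin (d + 1) → Fin N,
      (P i (t 0) * ∏ l : Fin d, P (t l.castSucc) (t l.succ)) •
        ((pathProd Am t)ᵀ * pathProd Am t) := by
    simp only [pathMoment, Finset.smul_sum, smul_smul]
    rw [Finset.sum_comm]
    simp
  rw [secondMomentOp_apply, hsum, Finset.mul_sum, Finset.sum_mul, pathMoment,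
    Fintype.sum_fun_fin_succ, Finset.sum_eq_single i]
  · refine Finset.sum_congr rfl fun t _ => ?_
    simp [Fin.prod_univ_succ, pathProd_cons, Matrix.mul_assoc]
  · intro x _ hx
    simp [hx]
  · simp

theorem pathMoment_eq_pow (hP : ∀ i, ∑ j, P i j = 1) (d : ℕ) :
    pathMoment Am P d = (secondMomentOp Am P ^ (d + 1)) 1 := by
  induction d with
  | zero =>
    ext1 i
    simp [pathMoment_zero, ← Finset.sum_smul, hP]
  | succ d ih => rw [pathMoment_succ, ih, pow_succ' _ (d + 1), Module.End.mul_apply]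

theorem Gmat_eq_pow (hP : ∀ i, ∑ j, P i j = 1) (i : Fin N) (j k : ℕ) :
    Gmat Am (fun _ : Fin 1 => P) (fun _ => 0) i j k = (secondMomentOp Am P ^ (k - j)) 1 i := by
  unfold Gmat
  split_ifs with hkj
  · rw [Nat.sub_eq_zero_of_le hkj]
    rfl
  · conv_rhs => rw [show k - j = k - j - 1 + 1 by omega, ← pathMoment_eq_pow Am P hP]
    rfl

theorem emssWith_iff (hP : ∀ i, ∑ j, P i j = 1) (c lam : ℝ) :
    EMSSWith Am (fun _ : Fin 1 => P) c lam (fun _ => 0) ↔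
      ∀ d, (secondMomentOp Am P ^ d) 1 ≤ (c * lam ^ d) • 1 := by
  simp only [EMSSWith, Gmat_eq_pow Am P hP]
  exact ⟨fun h d i => le_iff.2 (by simpa using h i 0 d d.zero_le), fun h i j k _ => h (k - j) i⟩

/-- (Remark 3, time-homogeneous stability criterion.) For a single
stochastic matrix `Π` (constant switching sequence), the time-homogeneous Markov jump linear
system is exponentially mean square stable iff there exist symmetric positive definite
matrices `Z(1),…,Z(N)` with `A(i)ᵀ (Σ_j π_{ij} Z(j)) A(i) − Z(i)` negative definite for
every `i ∈ 𝒩`. -/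
theorem statement17 (n N : ℕ) (Am : Fin N → Matrix (Fin n) (Fin n) ℝ)
    (Pi0 : Matrix (Fin N) (Fin N) ℝ)
    (hPnn : ∀ i j : Fin N, 0 ≤ Pi0 i j)
    (hProw : ∀ i : Fin N, ∑ j, Pi0 i j = 1) :
    (∃ c lam : ℝ, 1 ≤ c ∧ 0 ≤ lam ∧ lam < 1 ∧
        EMSSWith Am (fun _ : Fin 1 => Pi0) c lam (fun _ => 0)) ↔
      ∃ Z : Fin N → Matrix (Fin n) (Fin n) ℝ,
        (∀ i, (Z i).PosDef) ∧
        ∀ i, (Z i - (Am i)ᵀ * (∑ j, Pi0 i j • Z j) * Am i).PosDef := by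
  set T := secondMomentOp Am Pi0
  have hT : Monotone T := secondMomentOp_monotone Am hPnn
  have h1 : (0 : Fin N → Matrix (Fin n) (Fin n) ℝ) ≤ 1 := fun _ => PosSemidef.one.nonneg
  simp only [emssWith_iff Am Pi0 hProw]
  constructor
  · rintro ⟨c, lam, -, hlam0, hlam1, hdecay⟩
    obtain ⟨D, hD⟩ : ∃ D, c * lam ^ (D + 1) < 1 :=
      (((tendsto_pow_atTop_nhds_zero_of_lt_one hlam0 hlam1).const_mul c).eventually
        (gt_mem_nhds (by simp))).exists_forall_of_atTop.imp fun D hD => hD (D + 1) D.le_succ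
    obtain ⟨Z, hZ, hZT⟩ := Module.End.exists_lyapunov_of_pow_apply_le hT h1 (hdecay (D + 1))
    exact ⟨Z, fun i => posDef_of_smul_one_le one_pos (by simpa using hZ i),
      fun i => posDef_of_smul_one_le (sub_pos.2 hD) (hZT i)⟩
  · rintro ⟨Z, hZ, hZT⟩
    obtain ⟨δ, hδ, hδZ⟩ := pi_exists_pos_smul_one_le hZ
    obtain ⟨ε, hε, hεZ⟩ := pi_exists_pos_smul_one_le (Z := Z - T Z) hZT
    obtain ⟨b, hb⟩ := pi_exists_le_smul_one fun i => (hZ i).isHermitian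
    exact Module.End.exists_pow_apply_le_of_lyapunov hT h1 hδ hε hδZ hb hεZ

end SMJLS
end
end

section
/- Let Π be a single N×N stochastic matrix (time-homogeneous chain, ψ ≡ constant). If the time-homogeneous Markov jump linear system (𝒢, Π, p(0)) is weakly controllable and p_i(0) > 0 for all i ∈ 𝒩, then p_i(k) > 0 for all i ∈ 𝒩 and all k ∈ ℕ₀. -/
open Matrix
open scoped Classical

noncomputable section

namespace SMJLS

/-- Weak controllability of a Markov jump linear system driven by the switching sequence
`ψ`: for every initial `(x₀,θ₀)` with `P{θ(0)=θ₀} > 0` and every final `(x_f,θ_f)` there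
exist a finite time `k_f` and an admissible input `w_c` such that
`P{x(k_f)=x_f, θ(k_f)=θ_f ∣ θ(0)=θ₀} > 0` (equivalently, given `p_{θ₀}(0) > 0`, the joint
probability `P{x(k_f)=x_f, θ(k_f)=θ_f, θ(0)=θ₀}` is positive). -/
def WeaklyControllable {n m N J : ℕ} (Am : Fin N → Matrix (Fin n) (Fin n) ℝ)
    (Bm : Fin N → Matrix (Fin n) (Fin m) ℝ) (Pm : Fin J → Matrix (Fin N) (Fin N) ℝ)
    (ψ : ℕ → Fin J) (p0 : Fin N → ℝ) : Prop :=
  ∀ (x0 : Fin n → ℝ) (θ0 : Fin N), 0 < p0 θ0 → ∀ (xf : Fin n → ℝ) (θf : Fin N),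
    ∃ (kf : ℕ) (w : ℕ → (ℕ → Fin N) → Fin m → ℝ), Adapted w ∧
      Summable (fun k => energy Pm ψ p0 w k) ∧
      0 < pexp Pm ψ p0 kf (fun ω =>
        if ω 0 = θ0 ∧ traj Am Bm (fun _ => x0) w kf ω = xf ∧ ω kf = θf then 1 else 0)

/-- (Proposition 4.) For a time-homogeneous Markov jump linear system
(single stochastic matrix `Π`, constant switching sequence): if it is weakly controllable
and `p_i(0) > 0` for all `i ∈ 𝒩`, then `p_i(k) > 0` for all `i ∈ 𝒩` and `k ∈ ℕ₀`. -/
theorem statement19 (n m N : ℕ) (Am : Fin N → Matrix (Fin n) (Fin n) ℝ)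
    (Bm : Fin N → Matrix (Fin n) (Fin m) ℝ) (Pi0 : Matrix (Fin N) (Fin N) ℝ)
    (hPnn : ∀ i j : Fin N, 0 ≤ Pi0 i j)
    (hProw : ∀ i : Fin N, ∑ j, Pi0 i j = 1)
    (p0 : Fin N → ℝ) (hp0nn : ∀ i, 0 ≤ p0 i) (hp0sum : ∑ i, p0 i = 1)
    (hwc : WeaklyControllable Am Bm (fun _ : Fin 1 => Pi0) (fun _ => 0) p0)
    (hp0 : ∀ i, 0 < p0 i) :
    ∀ (k : ℕ) (i : Fin N), 0 < pdist (fun _ : Fin 1 => Pi0) (fun _ => 0) p0 k i := by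
  -- Key claim: every column of `Pi0` has a positive entry.
  have key : ∀ i : Fin N, ∃ j, 0 < Pi0 j i := by
    intro i
    by_cases hN : ∃ θ0 : Fin N, θ0 ≠ i
    · obtain ⟨θ0, hθ0⟩ := hN
      obtain ⟨kf, w, -, -, hpos⟩ := hwc 0 θ0 (hp0 θ0) 0 i
      unfold pexp at hpos
      obtain ⟨path, -, hne⟩ := Finset.exists_ne_zero_of_sum_ne_zero hpos.ne'
      have hw : weight (fun _ : Fin 1 => Pi0) (fun _ => 0) p0 kf path ≠ 0 := by
        intro h; exact hne (by rw [h, zero_mul])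
      have hcond : (fun l => path ⟨min l kf, Nat.lt_succ_of_le (min_le_right l kf)⟩) 0 = θ0 ∧
          traj Am Bm (fun _ => (0 : Fin n → ℝ)) w kf
            (fun l => path ⟨min l kf, Nat.lt_succ_of_le (min_le_right l kf)⟩) = 0 ∧
          (fun l => path ⟨min l kf, Nat.lt_succ_of_le (min_le_right l kf)⟩) kf = i := by
        by_contra hc
        exact hne (by simp only [if_neg hc, mul_zero])
      obtain ⟨h1, -, h3⟩ := hcond
      simp only at h1 h3
      -- kf cannot be 0, else θ0 = i
      cases kf with
      | zero =>
        exact absurd (h1.symm.trans h3) hθ0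
      | succ K =>
        -- extract the last transition factor from the positive weight
        have hfac : ∀ l : Fin (K + 1),
            Pi0 (path l.castSucc) (path l.succ) ≠ 0 := by
          intro l hl
          apply hw
          unfold weight
          rw [Finset.prod_eq_zero (Finset.mem_univ l) hl, mul_zero]
        refine ⟨path (Fin.last K).castSucc, ?_⟩
        have hlast : path (Fin.last K).succ = i := by
          have : ((Fin.last K).succ : Fin (K + 2)) =
              ⟨min (K + 1) (K + 1), Nat.lt_succ_of_le (min_le_right (K + 1) (K + 1))⟩ := by
            apply Fin.ext; simp
          rw [this]; exact h3
        rw [← hlast]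
        exact lt_of_le_of_ne (hPnn _ _) (Ne.symm (hfac (Fin.last K)))
    · -- N has a single element i
      push_neg at hN
      refine ⟨i, ?_⟩
      have hsum : ∑ j, Pi0 i j = Pi0 i i := by
        apply Finset.sum_eq_single
        · intro j _ hj; exact absurd (hN j) hj
        · intro h; exact absurd (Finset.mem_univ i) h
      have : Pi0 i i = 1 := by rw [← hsum, hProw i]
      rw [this]; exact one_pos
  intro k
  induction k with
  | zero => exact hp0
  | succ k ih =>
    intro i
    obtain ⟨j0, hj0⟩ := key i
    show 0 < Matrix.vecMul (pdist (fun _ : Fin 1 => Pi0) (fun _ => 0) p0 k) Pi0 i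
    rw [Matrix.vecMul, dotProduct]
    apply Finset.sum_pos'
    · intro j _
      exact mul_nonneg (le_of_lt (ih j)) (hPnn j i)
    · exact ⟨j0, Finset.mem_univ j0, mul_pos (ih j0) hj0⟩

end SMJLS
end
end
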